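/- arXiv:1510.01675 — 5 statements merged into one kernel-verified Lean document; each statement's English description precedes it below -/
import Mathlib

section
/- Let ν be a class (i) or class (ii) probability measure on [0,∞) with bounded continuous density f(x)=exp(−φ(x)), and let η be another probability measure with density g(x)=exp(−γ(x)). Suppose the limit lim_{x→∞} φ(x)/γ(x) exists and that g(x)/f(x) is bounded on every compact interval. Fix α>1. If lim_{x→∞} γ(x)/φ(x) > (α−1)/α then D^α(η|ν) < ∞, and if lim_{x→∞} γ(x)/φ(x) < (α−1)/α then D^α(η|ν) = ∞. -/
open Filter MeasureTheory Set
open scoped ENNReal Topology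

noncomputable section

/-- The `F`-divergence `D_F(η|ν)` between a reference density `f` and an
alternative density `g` on `(0,∞)` (the value `⊤` encodes an infinite divergence). -/
def Ddiv (F f g : ℝ → ℝ) : ℝ≥0∞ :=
  ∫⁻ x in Set.Ioi (0 : ℝ), ENNReal.ofReal (F (g x / f x) * f x)

/-- Generator of the polynomial (α-) divergence: `F(y) = (y^α - 1)/(α(α-1))`. -/
def Falpha (α : ℝ) : ℝ → ℝ := fun y => (y ^ α - 1) / (α * (α - 1))

/-- Class (i): the log-density grows at least linearly, `lim φ(x)/x > c > 0`. -/
def IsClassI (φ : ℝ → ℝ) : Prop :=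
  ∃ c : ℝ, 0 < c ∧ ∀ᶠ x in atTop, c < φ x / x

/-- Data witnessing that a distribution with log-density `φ` (density `exp(-φ)`) is of
class (ii): heavier than exponential but lighter than any power law, together with the
auxiliary function `Φ` and the inverse `Ψ = Φ⁻¹` of its restriction to `[x̄, ∞)`. -/
structure ClassIIData (φ : ℝ → ℝ) : Type where
  xbar : ℝ
  Φ : ℝ → ℝ
  Ψ : ℝ → ℝ
  xbar_pos : 0 < xbar
  tendsto_div_id : Tendsto (fun x => φ x / x) atTop (nhds 0)
  tendsto_div_log : Tendsto (fun x => φ x / Real.log x) atTop atTop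
  pos : ∀ x ∈ Set.Ici xbar, 0 < Φ x
  strictConcave : StrictConcaveOn ℝ (Set.Ici xbar) Φ
  smooth : ContDiffOn ℝ 2 Φ (Set.Ici xbar)
  strictMono : StrictMonoOn Φ (Set.Ici xbar)
  inv_left : ∀ x ∈ Set.Ici xbar, Ψ (Φ x) = x
  inv_right : ∀ y ∈ Set.Ici (Φ xbar), Φ (Ψ y) = y
  liminf_pos : ∃ c : ℝ, 0 < c ∧ ∀ᶠ x in atTop, c ≤ Ψ (φ x) / x
  limsup_lt_top : ∃ C : ℝ, ∀ᶠ x in atTop, Ψ (φ x) / x ≤ C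

namespace ClassIIData

variable {φ : ℝ → ℝ}

/-- `ȳ = exp(Φ(x̄))`. -/
def ybar (d : ClassIIData φ) : ℝ := Real.exp (d.Φ d.xbar)

/-- The constant `a = (1+log ȳ)/(Φ⁻¹(log ȳ)^θ + θ Φ⁻¹(log ȳ)^{θ-1} (Φ⁻¹)'(log ȳ))`. -/
def aconst (d : ClassIIData φ) (θ : ℝ) : ℝ :=
  (1 + Real.log d.ybar) /
    (d.Ψ (Real.log d.ybar) ^ θ +
      θ * d.Ψ (Real.log d.ybar) ^ (θ - 1) * deriv d.Ψ (Real.log d.ybar))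

/-- The constant `b = ȳ log ȳ - a ȳ Φ⁻¹(log ȳ)^θ`. -/
def bconst (d : ClassIIData φ) (θ : ℝ) : ℝ :=
  d.ybar * Real.log d.ybar - d.aconst θ * d.ybar * d.Ψ (Real.log d.ybar) ^ θ

/-- The divergence generator `F_Φ`: `y log y` for `y ≤ ȳ` and
`a y Φ⁻¹(log y)^θ + b` for `y > ȳ`. -/
def FPhi (d : ClassIIData φ) (θ : ℝ) : ℝ → ℝ := fun y =>
  if y ≤ d.ybar then y * Real.log y
  else d.aconst θ * y * d.Ψ (Real.log y) ^ θ + d.bconst θ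

/-- `ψ(x) = a Φ⁻¹(x)^θ`. -/
def psiFun (d : ClassIIData φ) (θ : ℝ) : ℝ → ℝ := fun x => d.aconst θ * d.Ψ x ^ θ

/-- The integrand of `I(c) = ∫_c^∞ e^y (ψ(y)+ψ'(y))(ψ'(y)+ψ''(y)) f((F_Φ'(e^y)-α₁)/α₂) dy`. -/
def Iintegrand (d : ClassIIData φ) (θ α₁ α₂ : ℝ) (f : ℝ → ℝ) : ℝ → ℝ := fun y =>
  Real.exp y * (d.psiFun θ y + deriv (d.psiFun θ) y) *
    (deriv (d.psiFun θ) y + deriv (deriv (d.psiFun θ)) y) *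
    f ((deriv (d.FPhi θ) (Real.exp y) - α₁) / α₂)

end ClassIIData

/-- Convex conjugate over `s ≥ 0`: `F*(x) = sup_{s ≥ 0} (x s - F(s))`. -/
def Fstar (F : ℝ → ℝ) : ℝ → ℝ := fun x => sSup ((fun s => x * s - F s) '' Set.Ici (0 : ℝ))

/-- Pseudo-regular variation: `limsup_{c→1} limsup_{x→∞} h(cx)/h(x) = 1`,
spelled out in ε-form. -/
def PseudoRegularlyVarying (h : ℝ → ℝ) : Prop :=
  (∀ ε > (0:ℝ), ∀ᶠ c in nhds (1:ℝ), ∀ᶠ x in atTop, h (c * x) / h x ≤ 1 + ε) ∧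
  (∀ ε > (0:ℝ), ∃ᶠ c in nhds (1:ℝ), ∃ᶠ x in atTop, 1 - ε ≤ h (c * x) / h x)

/-! On `(0, ∞)` the integrand of `D^α(η|ν)` is
`(exp((α-1)φ - αγ) - exp(-φ)) / (α(α-1))`. If eventually `γ ≥ cφ` with `αc > α - 1`, it is
dominated on a tail by `exp(-δφ)` with `δ = αc - (α-1) > 0`, which is integrable because `φ`
grows at least linearly (class (i)) or faster than every multiple of `log` (class (ii)); on the
remaining bounded interval `g/f` and `f` are bounded. If eventually `γ ≤ cφ` with `αc < α - 1`,
the exponent is at least `δφ → ∞` with `δ = (α-1) - αc`, so the integrand is bounded below by a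
positive constant on a half-line. -/

open Real

theorem IsClassI.tendsto_atTop {φ : ℝ → ℝ} (hφ : IsClassI φ) : Tendsto φ atTop atTop := by
  obtain ⟨c, hc, hlin⟩ := hφ
  refine tendsto_atTop_mono' atTop ?_ (tendsto_id.const_mul_atTop hc)
  filter_upwards [hlin, eventually_gt_atTop 0] with x hx hx0
  exact ((lt_div_iff₀ hx0).mp hx).le

theorem ClassIIData.tendsto_atTop {φ : ℝ → ℝ} (d : ClassIIData φ) : Tendsto φ atTop atTop := by
  refine tendsto_atTop_mono' atTop ?_ tendsto_log_atTop
  filter_upwards [d.tendsto_div_log.eventually_ge_atTop 1, eventually_gt_atTop 1] with x hx hx1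
  simpa using (le_div_iff₀ (log_pos hx1)).mp hx

theorem eventually_lintegral_Ioi_lt_top_of_eventually_le {h u : ℝ → ℝ} {a : ℝ}
    (hu : IntegrableOn u (Ioi a)) (hle : ∀ᶠ x in atTop, h x ≤ u x) :
    ∀ᶠ X in atTop, ∫⁻ x in Ioi X, ENNReal.ofReal (h x) < ⊤ := by
  filter_upwards [eventually_forall_ge_atTop.mpr hle, eventually_ge_atTop a] with X hX haX
  calc ∫⁻ x in Ioi X, ENNReal.ofReal (h x)
      ≤ ∫⁻ x in Ioi X, ENNReal.ofReal (u x) :=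
        setLIntegral_mono' measurableSet_Ioi fun x hx => ENNReal.ofReal_le_ofReal (hX x hx.le)
    _ < ⊤ := (hu.mono_set (Ioi_subset_Ioi haX)).lintegral_lt_top

theorem IsClassI.eventually_lintegral_exp_neg_mul_lt_top {φ : ℝ → ℝ} (hφ : IsClassI φ)
    {δ : ℝ} (hδ : 0 < δ) :
    ∀ᶠ X in atTop, ∫⁻ x in Ioi X, ENNReal.ofReal (exp (-(δ * φ x))) < ⊤ := by
  obtain ⟨c, hc, hlin⟩ := hφ
  refine eventually_lintegral_Ioi_lt_top_of_eventually_le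
    (exp_neg_integrableOn_Ioi 0 (mul_pos hδ hc)) ?_
  filter_upwards [hlin, eventually_gt_atTop 0] with x hx hx0
  have : c * x ≤ φ x := ((lt_div_iff₀ hx0).mp hx).le
  exact exp_le_exp.mpr (by nlinarith)

theorem ClassIIData.eventually_lintegral_exp_neg_mul_lt_top {φ : ℝ → ℝ} (d : ClassIIData φ)
    {δ : ℝ} (hδ : 0 < δ) :
    ∀ᶠ X in atTop, ∫⁻ x in Ioi X, ENNReal.ofReal (exp (-(δ * φ x))) < ⊤ := by
  refine eventually_lintegral_Ioi_lt_top_of_eventually_le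
    (integrableOn_Ioi_rpow_of_lt (by norm_num : (-2 : ℝ) < -1) one_pos) ?_
  filter_upwards [d.tendsto_div_log.eventually_ge_atTop (2 / δ), eventually_gt_atTop 1]
    with x hx hx1
  have hlog : 2 / δ * log x ≤ φ x := (le_div_iff₀ (log_pos hx1)).mp hx
  have hδφ : 2 * log x ≤ δ * φ x := by
    calc 2 * log x = δ * (2 / δ * log x) := by field_simp
      _ ≤ δ * φ x := by gcongr
  rw [rpow_def_of_pos (by linarith)]
  exact exp_le_exp.mpr (by linarith)

theorem Falpha_exp_div_exp_mul_exp (α p q : ℝ) :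
    Falpha α (exp (-q) / exp (-p)) * exp (-p) =
      (exp ((α - 1) * p - α * q) - exp (-p)) / (α * (α - 1)) := by
  rw [Falpha, ← exp_sub, ← exp_mul, div_mul_eq_mul_div, sub_mul, one_mul, ← exp_add]
  ring_nf

theorem Falpha_exp_div_exp_mul_exp_le {α c p q : ℝ} (hα : 1 < α) (hq : c * p ≤ q) :
    Falpha α (exp (-q) / exp (-p)) * exp (-p) ≤
      exp (-((α * c - (α - 1)) * p)) / (α * (α - 1)) := by
  rw [Falpha_exp_div_exp_mul_exp]
  have hexp : exp ((α - 1) * p - α * q) ≤ exp (-((α * c - (α - 1)) * p)) :=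
    exp_le_exp.mpr (by nlinarith)
  have : 0 < α * (α - 1) := by nlinarith
  gcongr
  linarith [exp_pos (-p)]

theorem le_Falpha_exp_div_exp_mul_exp {α c p q : ℝ} (hα : 1 < α) (hp : 0 ≤ p)
    (hq : q ≤ c * p) :
    ((α - 1) - α * c) * p / (α * (α - 1)) ≤ Falpha α (exp (-q) / exp (-p)) * exp (-p) := by
  rw [Falpha_exp_div_exp_mul_exp]
  have hexp : 1 + ((α - 1) - α * c) * p ≤ exp ((α - 1) * p - α * q) := by
    linarith [add_one_le_exp ((α - 1) * p - α * q),
      mul_le_mul_of_nonneg_left hq (by linarith : 0 ≤ α)]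
  have : 0 < α * (α - 1) := by nlinarith
  gcongr
  linarith [exp_le_one_iff.mpr (neg_nonpos.mpr hp)]

theorem Falpha_mul_le {α y t C M : ℝ} (hα : 1 < α) (hy : 0 ≤ y) (hyC : y ≤ C) (ht : 0 ≤ t)
    (htM : t ≤ M) : Falpha α y * t ≤ C ^ α * M / (α * (α - 1)) := by
  have hrpow : y ^ α ≤ C ^ α := rpow_le_rpow hy hyC (by linarith)
  have : 0 < α * (α - 1) := by nlinarith
  rw [Falpha, div_mul_eq_mul_div]
  refine div_le_div_of_nonneg_right ?_ this.le
  nlinarith [rpow_nonneg hy α, rpow_nonneg (hy.trans hyC) α]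

theorem lintegral_Ioi_lt_top_of_le_of_tail {h : ℝ → ℝ} {a X K : ℝ} (haX : a ≤ X)
    (hK : ∀ x ∈ Ioc a X, h x ≤ K) (htail : ∫⁻ x in Ioi X, ENNReal.ofReal (h x) < ⊤) :
    ∫⁻ x in Ioi a, ENNReal.ofReal (h x) < ⊤ := by
  rw [← Ioc_union_Ioi_eq_Ioi haX, lintegral_union measurableSet_Ioi (Ioc_disjoint_Ioi le_rfl)]
  refine ENNReal.add_lt_top.mpr ⟨?_, htail⟩
  calc ∫⁻ x in Ioc a X, ENNReal.ofReal (h x)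
      ≤ ∫⁻ _ in Ioc a X, ENNReal.ofReal K :=
        setLIntegral_mono' measurableSet_Ioc fun x hx => ENNReal.ofReal_le_ofReal (hK x hx)
    _ < ⊤ := by
        rw [setLIntegral_const, Real.volume_Ioc]
        exact ENNReal.mul_lt_top ENNReal.ofReal_lt_top ENNReal.ofReal_lt_top

theorem lintegral_Ioi_eq_top_of_eventually_ge {h : ℝ → ℝ} {ε : ℝ} (hε : 0 < ε)
    (hge : ∀ᶠ x in atTop, ε ≤ h x) (a : ℝ) :
    ∫⁻ x in Ioi a, ENNReal.ofReal (h x) = ⊤ := by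
  obtain ⟨X, hX⟩ := eventually_atTop.mp hge
  refine top_le_iff.mp ?_
  calc (⊤ : ℝ≥0∞) = ∫⁻ _ in Ioi (max a X), ENNReal.ofReal ε := by
        rw [setLIntegral_const, Real.volume_Ioi, ENNReal.mul_top (ENNReal.ofReal_pos.mpr hε).ne']
    _ ≤ ∫⁻ x in Ioi (max a X), ENNReal.ofReal (h x) :=
        setLIntegral_mono' measurableSet_Ioi fun x hx =>
          ENNReal.ofReal_le_ofReal (hX x ((le_max_right a X).trans hx.le))
    _ ≤ ∫⁻ x in Ioi a, ENNReal.ofReal (h x) :=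
        lintegral_mono_set (Ioi_subset_Ioi (le_max_left a X))

theorem Ddiv_Falpha_lt_top {φ γ f g : ℝ → ℝ} {α c : ℝ} (hα : 1 < α)
    (hf : ∀ x ∈ Ioi (0 : ℝ), f x = exp (-(φ x))) (hg : ∀ x ∈ Ioi (0 : ℝ), g x = exp (-(γ x)))
    (hbdd : ∃ M : ℝ, ∀ x ∈ Ioi (0 : ℝ), f x ≤ M)
    (hratio : ∀ K : Set ℝ, IsCompact K → ∃ C : ℝ, ∀ x ∈ K ∩ Ioi (0 : ℝ), g x / f x ≤ C)
    (hφ : Tendsto φ atTop atTop)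
    (htail : ∀ δ > 0, ∀ᶠ X in atTop, ∫⁻ x in Ioi X, ENNReal.ofReal (exp (-(δ * φ x))) < ⊤)
    (hc : (α - 1) / α < c) (hγ : ∀ᶠ x in atTop, c ≤ γ x / φ x) :
    Ddiv (Falpha α) f g < ⊤ := by
  set δ := α * c - (α - 1)
  have hδ : 0 < δ := by linarith [(div_lt_iff₀ (by linarith : 0 < α)).mp hc]
  have hlin : ∀ᶠ x in atTop, c * φ x ≤ γ x := by
    filter_upwards [hγ, hφ.eventually_gt_atTop 0] with x hx hx0
    exact (le_div_iff₀ hx0).mp hx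
  obtain ⟨X, hX0, hXtail, hXlin⟩ := ((eventually_gt_atTop 0).and
    ((htail δ hδ).and (eventually_forall_ge_atTop.mpr hlin))).exists
  have hden : 0 < α * (α - 1) := by nlinarith
  obtain ⟨M, hM⟩ := hbdd
  obtain ⟨C, hC⟩ := hratio (Icc 0 X) isCompact_Icc
  refine lintegral_Ioi_lt_top_of_le_of_tail hX0.le (K := C ^ α * M / (α * (α - 1)))
    (fun x hx => ?_) ?_
  · have hx0 : x ∈ Ioi (0 : ℝ) := hx.1
    have hfx : 0 < f x := by rw [hf x hx0]; exact exp_pos _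
    have hgx : 0 ≤ g x := by rw [hg x hx0]; exact (exp_pos _).le
    exact Falpha_mul_le hα (div_nonneg hgx hfx.le) (hC x ⟨Ioc_subset_Icc_self hx, hx0⟩)
      hfx.le (hM x hx0)
  · calc ∫⁻ x in Ioi X, ENNReal.ofReal (Falpha α (g x / f x) * f x)
        ≤ ∫⁻ x in Ioi X, ENNReal.ofReal (α * (α - 1))⁻¹ * ENNReal.ofReal (exp (-(δ * φ x))) := by
          refine setLIntegral_mono' measurableSet_Ioi fun x hx => ?_
          have hx0 : x ∈ Ioi (0 : ℝ) := hX0.trans hx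
          rw [hf x hx0, hg x hx0, ← ENNReal.ofReal_mul (inv_pos.mpr hden).le, inv_mul_eq_div]
          exact ENNReal.ofReal_le_ofReal (Falpha_exp_div_exp_mul_exp_le hα (hXlin x hx.le))
      _ < ⊤ := by
          rw [lintegral_const_mul' _ _ ENNReal.ofReal_ne_top]
          exact ENNReal.mul_lt_top ENNReal.ofReal_lt_top hXtail

theorem Ddiv_Falpha_eq_top {φ γ f g : ℝ → ℝ} {α c : ℝ} (hα : 1 < α)
    (hf : ∀ x ∈ Ioi (0 : ℝ), f x = exp (-(φ x))) (hg : ∀ x ∈ Ioi (0 : ℝ), g x = exp (-(γ x)))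
    (hφ : Tendsto φ atTop atTop) (hc : c < (α - 1) / α) (hγ : ∀ᶠ x in atTop, γ x / φ x ≤ c) :
    Ddiv (Falpha α) f g = ⊤ := by
  set δ := (α - 1) - α * c
  have hδ : 0 < δ := by linarith [(lt_div_iff₀ (by linarith : 0 < α)).mp hc]
  have hden : 0 < α * (α - 1) := by nlinarith
  refine lintegral_Ioi_eq_top_of_eventually_ge (one_div_pos.mpr hden) ?_ 0
  filter_upwards [hγ, hφ.eventually_ge_atTop (1 / δ), hφ.eventually_gt_atTop 0,
    eventually_gt_atTop 0] with x hγx hφx hφ0 hx0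
  rw [hf x hx0, hg x hx0]
  calc 1 / (α * (α - 1)) ≤ δ * φ x / (α * (α - 1)) := by
        gcongr
        exact (div_le_iff₀' hδ).mp hφx
    _ ≤ _ := le_Falpha_exp_div_exp_mul_exp hα hφ0.le ((div_le_iff₀ hφ0).mp hγx)

theorem stmt2_general
    (φ γ f g : ℝ → ℝ) (α : ℝ) (hα : 1 < α)
    (hf : ∀ x ∈ Set.Ioi (0:ℝ), f x = Real.exp (-(φ x)))
    (hg : ∀ x ∈ Set.Ioi (0:ℝ), g x = Real.exp (-(γ x)))
    (hclass : IsClassI φ ∨ Nonempty (ClassIIData φ))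
    (hbdd : ∃ M : ℝ, ∀ x ∈ Set.Ioi (0:ℝ), f x ≤ M)
    (hratio : ∀ K : Set ℝ, IsCompact K → ∃ C : ℝ, ∀ x ∈ K ∩ Set.Ioi (0:ℝ), g x / f x ≤ C) :
    ((∃ c : ℝ, (α - 1) / α < c ∧ ∀ᶠ x in atTop, c ≤ γ x / φ x) →
        Ddiv (Falpha α) f g < ⊤) ∧
    ((∃ c : ℝ, c < (α - 1) / α ∧ ∀ᶠ x in atTop, γ x / φ x ≤ c) →
        Ddiv (Falpha α) f g = ⊤) := by
  obtain ⟨hφ, htail⟩ : Tendsto φ atTop atTop ∧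
      ∀ δ > 0, ∀ᶠ X in atTop, ∫⁻ x in Ioi X, ENNReal.ofReal (exp (-(δ * φ x))) < ⊤ := by
    rcases hclass with hI | ⟨⟨d⟩⟩
    · exact ⟨hI.tendsto_atTop, fun _ => hI.eventually_lintegral_exp_neg_mul_lt_top⟩
    · exact ⟨d.tendsto_atTop, fun _ => d.eventually_lintegral_exp_neg_mul_lt_top⟩
  exact ⟨fun ⟨_, hc, hγ⟩ => Ddiv_Falpha_lt_top hα hf hg hbdd hratio hφ htail hc hγ,
    fun ⟨_, hc, hγ⟩ => Ddiv_Falpha_eq_top hα hf hg hφ hc hγ⟩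

/-- Proposition 3.3 (i): α-divergence balls around class (i)/(ii) models. -/
theorem stmt2
    (φ γ f g : ℝ → ℝ) (α : ℝ) (hα : 1 < α)
    (hf : ∀ x ∈ Set.Ioi (0:ℝ), f x = Real.exp (-(φ x)))
    (hg : ∀ x ∈ Set.Ioi (0:ℝ), g x = Real.exp (-(γ x)))
    (hfc : ContinuousOn f (Set.Ioi 0)) (hgc : ContinuousOn g (Set.Ioi 0))
    (hfint : ∫ x in Set.Ioi (0:ℝ), f x = 1)
    (hgint : ∫ x in Set.Ioi (0:ℝ), g x = 1)
    (hclass : IsClassI φ ∨ Nonempty (ClassIIData φ))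
    (hbdd : ∃ M : ℝ, ∀ x ∈ Set.Ioi (0:ℝ), f x ≤ M)
    (hratio : ∀ K : Set ℝ, IsCompact K → ∃ C : ℝ, ∀ x ∈ K ∩ Set.Ioi (0:ℝ), g x / f x ≤ C)
    (hlim : ∃ L : ℝ, Tendsto (fun x => φ x / γ x) atTop (nhds L)) :
    ((∃ c : ℝ, (α - 1) / α < c ∧ ∀ᶠ x in atTop, c ≤ γ x / φ x) →
        Ddiv (Falpha α) f g < ⊤) ∧
    ((∃ c : ℝ, c < (α - 1) / α ∧ ∀ᶠ x in atTop, γ x / φ x ≤ c) →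
        Ddiv (Falpha α) f g = ⊤) :=
  stmt2_general φ γ f g α hα hf hg hclass hbdd hratio
end
end

section
/- Let ν and η be probability measures on [0,∞) with continuous densities f(x)=exp(−φ(x)) and g(x)=exp(−γ(x)), where f is bounded, g/f is bounded on every compact interval, and f(x)>0 for x above some threshold. Fix α>1 and set h(x) = α·γ(x)/φ(x) − (α−1). Suppose h(x) converges as x→∞ and suppose there exists T ∈ ℝ such that ∫₀^∞ f(x)^t dx = ∞ for all t < T and ∫₀^∞ f(x)^t dx < ∞ for all t > T. Then lim_{x→∞} h(x) > T implies D^α(η|ν) < ∞, and lim_{x→∞} h(x) < T implies D^α(η|ν) = ∞. -/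
open Filter MeasureTheory Set
open scoped ENNReal Topology

noncomputable section

/-!
Put `h = α γ / φ - (α - 1)`. Where `φ ≠ 0`, `(g/f)^α f = f^h`, and the divergence integrand is
`((g/f)^α f - f) / (α(α - 1))` with `f` integrable. Since `a ↦ f^a` is monotone, increasing or
decreasing according as `f ≥ 1` or `f ≤ 1`, one has `f^q ≤ f^p + f^r` whenever `p ≤ q ≤ r`.
If `T < H`, eventually `h ∈ [t, H + 1]` with `T < t`, so on a tail the integrand is dominated
by the integrable `f^t + f^(H+1)`, while on the remaining bounded piece `g/f` and `f` are bounded.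
If `H < T`, eventually `h ≤ t < T`, so `f^t ≤ f^h + f^(T+1)` on a tail, and `∫ f^t` diverges on
every tail.
-/

lemma Falpha_mul_eq (α y a : ℝ) : Falpha α y * a = (y ^ α * a - a) / (α * (α - 1)) := by
  rw [Falpha, div_mul_eq_mul_div, sub_mul, one_mul]

lemma Falpha_mul_le_s4 {α : ℝ} (hα : 1 < α) (y : ℝ) {a : ℝ} (ha : 0 ≤ a) :
    Falpha α y * a ≤ (α * (α - 1))⁻¹ * (y ^ α * a) := by
  rw [Falpha_mul_eq, div_eq_inv_mul]
  have : 0 < α * (α - 1) := by nlinarith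
  gcongr
  linarith

lemma rpow_mul_eq_mul_Falpha_mul_add {α : ℝ} (hα : 1 < α) (y a : ℝ) :
    y ^ α * a = α * (α - 1) * (Falpha α y * a) + a := by
  have : α * (α - 1) ≠ 0 := by nlinarith
  rw [Falpha_mul_eq, mul_div_cancel₀ _ this]
  ring

lemma exp_neg_div_exp_neg_rpow_mul (α a b : ℝ) (ha : a ≠ 0) :
    (Real.exp (-b) / Real.exp (-a)) ^ α * Real.exp (-a) =
      Real.exp (-a) ^ (α * b / a - (α - 1)) := by
  rw [← Real.exp_sub, ← Real.exp_mul, ← Real.exp_mul, ← Real.exp_add]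
  congr 1
  field_simp
  ring

lemma Real.rpow_le_rpow_add_rpow {a p q r : ℝ} (ha : 0 < a) (hpq : p ≤ q) (hqr : q ≤ r) :
    a ^ q ≤ a ^ p + a ^ r := by
  rcases le_total a 1 with ha1 | ha1
  · linarith [Real.rpow_le_rpow_of_exponent_ge ha ha1 hpq, Real.rpow_nonneg ha.le r]
  · linarith [Real.rpow_le_rpow_of_exponent_le ha1 hqr, Real.rpow_nonneg ha.le p]

lemma exp_neg_div_exp_neg_rpow_mul_le {α a b p r : ℝ} (hp : 1 - α < p)
    (hq : α * b / a - (α - 1) ∈ Icc p r) :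
    (Real.exp (-b) / Real.exp (-a)) ^ α * Real.exp (-a) ≤
      Real.exp (-a) ^ p + Real.exp (-a) ^ r := by
  -- at `a = 0` the exponent takes the junk value `1 - α < p`
  have ha : a ≠ 0 := fun h0 => by
    simp only [h0, div_zero, mem_Icc] at hq
    linarith [hq.1]
  rw [exp_neg_div_exp_neg_rpow_mul α a b ha]
  exact Real.rpow_le_rpow_add_rpow (Real.exp_pos _) hq.1 hq.2

lemma exp_neg_rpow_le_exp_neg_div_exp_neg_rpow_mul_add {α a b q r : ℝ}
    (hq : α * b / a - (α - 1) ≤ q) (hqr : q ≤ r) :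
    Real.exp (-a) ^ q ≤
      (Real.exp (-b) / Real.exp (-a)) ^ α * Real.exp (-a) + Real.exp (-a) ^ r := by
  by_cases ha : a = 0
  · simp only [ha, neg_zero, Real.exp_zero, Real.one_rpow, div_one, mul_one,
      le_add_iff_nonneg_left]
    positivity
  · rw [exp_neg_div_exp_neg_rpow_mul α a b ha]
    exact Real.rpow_le_rpow_add_rpow (Real.exp_pos _) hq hqr

lemma exists_nonneg_forall_Ioi_of_eventually_atTop {p : ℝ → Prop} (h : ∀ᶠ x in atTop, p x) :
    ∃ X, 0 ≤ X ∧ ∀ x ∈ Ioi X, p x := by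
  obtain ⟨X, hX⟩ := eventually_atTop.1 h
  exact ⟨max X 0, le_max_right _ _, fun x hx => hX x ((le_max_left _ _).trans hx.le)⟩

section Density

variable {f : ℝ → ℝ}

lemma setLIntegral_Ioi_rpow_eq_top {M t X : ℝ} (hX : 0 ≤ X) (hpos : ∀ x ∈ Ioi 0, 0 < f x)
    (hM : ∀ x ∈ Ioi 0, f x ≤ M) (htop : ∫⁻ x in Ioi 0, ENNReal.ofReal (f x ^ t) = ⊤) :
    ∫⁻ x in Ioi X, ENNReal.ofReal (f x ^ t) = ⊤ := by
  have hXsub : Ioi X ⊆ Ioi 0 := Ioi_subset_Ioi hX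
  rcases lt_or_ge t 0 with ht | ht
  · -- a negative power of a bounded function is bounded below by a positive constant
    have hM0 : 0 < M := (hpos (X + 1) (by simp; linarith)).trans_le (hM _ (by simp; linarith))
    refine eq_top_iff.2 (le_trans ?_ (setLIntegral_mono' measurableSet_Ioi fun x hx =>
      ENNReal.ofReal_le_ofReal (Real.rpow_le_rpow_of_nonpos (hpos x (hXsub hx))
        (hM x (hXsub hx)) ht.le)))
    rw [setLIntegral_const, Real.volume_Ioi, ENNReal.mul_top]
    exact (ENNReal.ofReal_pos.2 (Real.rpow_pos_of_pos hM0 t)).ne'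
  · have hbody : ∫⁻ x in Ioc 0 X, ENNReal.ofReal (f x ^ t) < ⊤ := by
      refine setLIntegral_lt_top_of_le_nnreal (by simp) ⟨(M ^ t).toNNReal, fun x hx => ?_⟩
      rw [ENNReal.ofNNReal_toNNReal]
      exact ENNReal.ofReal_le_ofReal (Real.rpow_le_rpow (hpos x hx.1).le (hM x hx.1) ht)
    have hsplit : ⊤ ≤ (∫⁻ x in Ioc 0 X, ENNReal.ofReal (f x ^ t)) +
        ∫⁻ x in Ioi X, ENNReal.ofReal (f x ^ t) := by
      rw [← htop, ← Ioc_union_Ioi_eq_Ioi hX]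
      exact lintegral_union_le _ _ _
    rw [top_le_iff, ENNReal.add_eq_top] at hsplit
    exact hsplit.resolve_left hbody.ne

lemma ContinuousOn.aemeasurable_ofReal_rpow {s : Set ℝ} (hfc : ContinuousOn f s)
    (hs : MeasurableSet s) (r : ℝ) :
    AEMeasurable (fun x => ENNReal.ofReal (f x ^ r)) (volume.restrict s) :=
  ((hfc.aemeasurable hs).pow_const r).ennreal_ofReal

lemma Ddiv_Falpha_lt_top_s4 {α : ℝ} (hα : 1 < α) {g : ℝ → ℝ} {M C X t s : ℝ} (hX : 0 ≤ X)
    (hfc : ContinuousOn f (Ioi 0)) (hpos : ∀ x ∈ Ioi 0, 0 < f x) (hg : ∀ x ∈ Ioi 0, 0 ≤ g x)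
    (hM : ∀ x ∈ Ioi 0, f x ≤ M) (hC : ∀ x ∈ Ioc 0 X, g x / f x ≤ C)
    (ht : ∫⁻ x in Ioi 0, ENNReal.ofReal (f x ^ t) < ⊤)
    (hs : ∫⁻ x in Ioi 0, ENNReal.ofReal (f x ^ s) < ⊤)
    (htail : ∀ x ∈ Ioi X, (g x / f x) ^ α * f x ≤ f x ^ t + f x ^ s) :
    Ddiv (Falpha α) f g < ⊤ := by
  set c := (α * (α - 1))⁻¹
  have hc : 0 ≤ c := by positivity
  have hbody : ∫⁻ x in Ioc 0 X, ENNReal.ofReal (Falpha α (g x / f x) * f x) < ⊤ := by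
    refine setLIntegral_lt_top_of_le_nnreal (by simp)
      ⟨(c * (C ^ α * M)).toNNReal, fun x hx => ?_⟩
    have hy : 0 ≤ g x / f x := div_nonneg (hg x hx.1) (hpos x hx.1).le
    rw [ENNReal.ofNNReal_toNNReal]
    refine ENNReal.ofReal_le_ofReal ((Falpha_mul_le_s4 hα _ (hpos x hx.1).le).trans ?_)
    have hC0 : 0 ≤ C := hy.trans (hC x hx)
    gcongr
    exacts [(hpos x hx.1).le, hC x hx, hM x hx.1]
  have htail' : ∫⁻ x in Ioi X, ENNReal.ofReal (Falpha α (g x / f x) * f x) < ⊤ := by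
    calc _ ≤ ∫⁻ x in Ioi X,
            ENNReal.ofReal c * (ENNReal.ofReal (f x ^ t) + ENNReal.ofReal (f x ^ s)) := by
          refine setLIntegral_mono' measurableSet_Ioi fun x hx => ?_
          have hf := hpos x (Ioi_subset_Ioi hX hx)
          rw [← ENNReal.ofReal_add (Real.rpow_nonneg hf.le _) (Real.rpow_nonneg hf.le _),
            ← ENNReal.ofReal_mul hc]
          exact ENNReal.ofReal_le_ofReal
            ((Falpha_mul_le_s4 hα _ hf.le).trans (by gcongr; exact htail x hx))
      _ ≤ ∫⁻ x in Ioi 0,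
            ENNReal.ofReal c * (ENNReal.ofReal (f x ^ t) + ENNReal.ofReal (f x ^ s)) :=
          lintegral_mono_set (Ioi_subset_Ioi hX)
      _ = ENNReal.ofReal c * ((∫⁻ x in Ioi 0, ENNReal.ofReal (f x ^ t)) +
            ∫⁻ x in Ioi 0, ENNReal.ofReal (f x ^ s)) := by
          rw [lintegral_const_mul' _ _ ENNReal.ofReal_ne_top,
            lintegral_add_right' _ (hfc.aemeasurable_ofReal_rpow measurableSet_Ioi s)]
      _ < ⊤ := ENNReal.mul_lt_top ENNReal.ofReal_lt_top (ENNReal.add_lt_top.2 ⟨ht, hs⟩)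
  calc Ddiv (Falpha α) f g
      = ∫⁻ x in Ioc 0 X ∪ Ioi X, ENNReal.ofReal (Falpha α (g x / f x) * f x) := by
        rw [Ioc_union_Ioi_eq_Ioi hX, Ddiv]
    _ ≤ _ := lintegral_union_le _ _ _
    _ < ⊤ := ENNReal.add_lt_top.2 ⟨hbody, htail'⟩

lemma Ddiv_Falpha_eq_top_s4 {α : ℝ} (hα : 1 < α) {g : ℝ → ℝ} {X t s : ℝ} (hX : 0 ≤ X)
    (hfc : ContinuousOn f (Ioi 0)) (hf : ∫⁻ x in Ioi 0, ENNReal.ofReal (f x) < ⊤)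
    (ht : ∫⁻ x in Ioi X, ENNReal.ofReal (f x ^ t) = ⊤)
    (hs : ∫⁻ x in Ioi 0, ENNReal.ofReal (f x ^ s) < ⊤)
    (htail : ∀ x ∈ Ioi X, f x ^ t ≤ (g x / f x) ^ α * f x + f x ^ s) :
    Ddiv (Falpha α) f g = ⊤ := by
  have hc : 0 ≤ α * (α - 1) := by nlinarith
  have hfcX : ContinuousOn f (Ioi X) := hfc.mono (Ioi_subset_Ioi hX)
  have hrest_meas : AEMeasurable (fun x => ENNReal.ofReal (f x) + ENNReal.ofReal (f x ^ s))
      (volume.restrict (Ioi X)) :=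
    (hfcX.aemeasurable measurableSet_Ioi).ennreal_ofReal.add
      (hfcX.aemeasurable_ofReal_rpow measurableSet_Ioi s)
  have hrest : ∫⁻ x in Ioi X, (ENNReal.ofReal (f x) + ENNReal.ofReal (f x ^ s)) < ⊤ := by
    refine (lintegral_mono_set (Ioi_subset_Ioi hX)).trans_lt ?_
    rw [lintegral_add_right' _ (hfc.aemeasurable_ofReal_rpow measurableSet_Ioi s)]
    exact ENNReal.add_lt_top.2 ⟨hf, hs⟩
  have hsplit : ⊤ ≤ ENNReal.ofReal (α * (α - 1)) *
      (∫⁻ x in Ioi X, ENNReal.ofReal (Falpha α (g x / f x) * f x)) +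
      ∫⁻ x in Ioi X, (ENNReal.ofReal (f x) + ENNReal.ofReal (f x ^ s)) := by
    rw [← ht, ← lintegral_const_mul' _ _ ENNReal.ofReal_ne_top,
      ← lintegral_add_right' _ hrest_meas]
    refine setLIntegral_mono' measurableSet_Ioi fun x hx => ?_
    rw [← ENNReal.ofReal_mul hc]
    refine (ENNReal.ofReal_le_ofReal ?_).trans
      (ENNReal.ofReal_add_le.trans (by gcongr; exact ENNReal.ofReal_add_le))
    have hx := htail x hx
    rw [rpow_mul_eq_mul_Falpha_mul_add hα] at hx
    linarith
  rw [top_le_iff, ENNReal.add_eq_top, or_iff_left hrest.ne, ENNReal.mul_eq_top] at hsplit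
  refine top_le_iff.1 (le_trans ?_ (lintegral_mono_set (Ioi_subset_Ioi hX)))
  exact (hsplit.resolve_right fun h => ENNReal.ofReal_ne_top h.1).2.ge

end Density

theorem stmt4_general
    (φ γ f g : ℝ → ℝ) (α : ℝ) (hα : 1 < α)
    (hf : ∀ x ∈ Set.Ioi (0:ℝ), f x = Real.exp (-(φ x)))
    (hg : ∀ x ∈ Set.Ioi (0:ℝ), g x = Real.exp (-(γ x)))
    (hfc : ContinuousOn f (Set.Ioi 0))
    (hfint : ∫ x in Set.Ioi (0:ℝ), f x = 1)
    (hbdd : ∃ M : ℝ, ∀ x ∈ Set.Ioi (0:ℝ), f x ≤ M)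
    (hratio : ∀ K : Set ℝ, IsCompact K → ∃ C : ℝ, ∀ x ∈ K ∩ Set.Ioi (0:ℝ), g x / f x ≤ C)
    (H : ℝ)
    (hconv : Tendsto (fun x => α * γ x / φ x - (α - 1)) atTop (nhds H))
    (T : ℝ)
    (hTinf : ∀ t : ℝ, t < T → (∫⁻ x in Set.Ioi (0:ℝ), ENNReal.ofReal (f x ^ t)) = ⊤)
    (hTfin : ∀ t : ℝ, T < t → (∫⁻ x in Set.Ioi (0:ℝ), ENNReal.ofReal (f x ^ t)) < ⊤) :
    (T < H → Ddiv (Falpha α) f g < ⊤) ∧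
    (H < T → Ddiv (Falpha α) f g = ⊤) := by
  obtain ⟨M, hM⟩ := hbdd
  have hpos : ∀ x ∈ Ioi (0:ℝ), 0 < f x := fun x hx => hf x hx ▸ Real.exp_pos _
  constructor
  · intro hTH
    have hT : 0 ≤ T := le_of_not_gt fun hT => by simpa using hTfin 0 hT
    obtain ⟨X, hX, hXh⟩ := exists_nonneg_forall_Ioi_of_eventually_atTop
      (hconv.eventually (Icc_mem_nhds (show (T + H) / 2 < H by linarith) (lt_add_one H)))
    obtain ⟨C, hC⟩ := hratio (Icc 0 X) isCompact_Icc
    refine Ddiv_Falpha_lt_top_s4 hα hX hfc hpos (fun x hx => (hg x hx).symm ▸ (Real.exp_pos _).le)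
      hM (fun x hx => hC x ⟨Ioc_subset_Icc_self hx, hx.1⟩) (hTfin ((T + H) / 2) (by linarith))
      (hTfin (H + 1) (by linarith)) fun x hx => ?_
    rw [hf x (Ioi_subset_Ioi hX hx), hg x (Ioi_subset_Ioi hX hx)]
    exact exp_neg_div_exp_neg_rpow_mul_le (by linarith) (hXh x hx)
  · intro hHT
    obtain ⟨X, hX, hXh⟩ := exists_nonneg_forall_Ioi_of_eventually_atTop
      (hconv.eventually (gt_mem_nhds (show H < (H + T) / 2 by linarith)))
    have hf1 : ∫⁻ x in Ioi 0, ENNReal.ofReal (f x) < ⊤ :=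
      (Integrable.of_integral_ne_zero (by rw [hfint]; exact one_ne_zero)).lintegral_lt_top
    refine Ddiv_Falpha_eq_top_s4 hα hX hfc hf1
      (setLIntegral_Ioi_rpow_eq_top hX hpos hM (hTinf ((H + T) / 2) (by linarith)))
      (hTfin (T + 1) (by linarith)) fun x hx => ?_
    rw [hf x (Ioi_subset_Ioi hX hx), hg x (Ioi_subset_Ioi hX hx)]
    exact exp_neg_rpow_le_exp_neg_div_exp_neg_rpow_mul_add (hXh x hx).le (by linarith)

/-- the key claim in the proof of Proposition 3.3. -/
theorem stmt4
    (φ γ f g : ℝ → ℝ) (α : ℝ) (hα : 1 < α)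
    (hf : ∀ x ∈ Set.Ioi (0:ℝ), f x = Real.exp (-(φ x)))
    (hg : ∀ x ∈ Set.Ioi (0:ℝ), g x = Real.exp (-(γ x)))
    (hfc : ContinuousOn f (Set.Ioi 0)) (hgc : ContinuousOn g (Set.Ioi 0))
    (hfint : ∫ x in Set.Ioi (0:ℝ), f x = 1)
    (hgint : ∫ x in Set.Ioi (0:ℝ), g x = 1)
    (hbdd : ∃ M : ℝ, ∀ x ∈ Set.Ioi (0:ℝ), f x ≤ M)
    (hratio : ∀ K : Set ℝ, IsCompact K → ∃ C : ℝ, ∀ x ∈ K ∩ Set.Ioi (0:ℝ), g x / f x ≤ C)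
    (H : ℝ)
    (hconv : Tendsto (fun x => α * γ x / φ x - (α - 1)) atTop (nhds H))
    (T : ℝ)
    (hTinf : ∀ t : ℝ, t < T → (∫⁻ x in Set.Ioi (0:ℝ), ENNReal.ofReal (f x ^ t)) = ⊤)
    (hTfin : ∀ t : ℝ, T < t → (∫⁻ x in Set.Ioi (0:ℝ), ENNReal.ofReal (f x ^ t)) < ⊤) :
    (T < H → Ddiv (Falpha α) f g < ⊤) ∧
    (H < T → Ddiv (Falpha α) f g = ⊤) :=
  stmt4_general φ γ f g α hα hf hg hfc hfint hbdd hratio H hconv T hTinf hTfin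
end
end

section
/- Let ν be a class (ii) distribution with associated functions f, φ, Φ, let θ>1, and let F_Φ be the associated divergence-generating function. Then for any probability measure η on [0,∞) with density g, finiteness of D_{F_Φ}(η|ν) implies finiteness of the Kullback–Leibler divergence D^{KL}(η|ν). -/
open Filter MeasureTheory Set
open scoped ENNReal Topology

noncomputable section

/-!
Concavity of `Φ` makes `Ψ = Φ⁻¹` grow at least linearly, so for large `y` the branch
`a y Ψ(log y)^θ + b` of `F_Φ` (with `a > 0`) dominates a multiple of `y log y`, while on bounded
ranges `y log y` is bounded. Hence `y log y ≤ max C (K F_Φ(y))` for `y ≥ 0`, and since `f` has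
finite mass, `D^{KL}(η|ν) ≤ C + K D_{F_Φ}(η|ν)`.
-/

namespace ClassIIData

variable {φ : ℝ → ℝ} (d : ClassIIData φ)

theorem tendsto_atTop_s7 (d : ClassIIData φ) : Tendsto φ atTop atTop := by
  refine (d.tendsto_div_log.atTop_mul_atTop₀ Real.tendsto_log_atTop).congr' ?_
  filter_upwards [eventually_gt_atTop (1 : ℝ)] with x hx
  exact div_mul_cancel₀ _ (Real.log_pos hx).ne'

/-- Take `Ψ (φ x)` for large `x`: it is `≥ c x ≥ x̄`, and `Φ` maps it to `φ x → ∞`. -/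
theorem exists_le_Φ (M : ℝ) : ∃ x, d.xbar ≤ x ∧ M ≤ d.Φ x := by
  obtain ⟨c, hc, hΨφ⟩ := d.liminf_pos
  obtain ⟨x, hφ, hx, hx0, hcx⟩ := ((d.tendsto_atTop_s7.eventually_ge_atTop (max M (d.Φ d.xbar))).and
    ((eventually_ge_atTop (d.xbar / c)).and ((eventually_gt_atTop 0).and hΨφ))).exists
  have hxbar : d.xbar ≤ c * x := by rwa [div_le_iff₀ hc, mul_comm] at hx
  refine ⟨d.Ψ (φ x), hxbar.trans ((le_div_iff₀ hx0).mp hcx), ?_⟩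
  rw [d.inv_right _ ((le_max_right _ _).trans hφ)]
  exact (le_max_left _ _).trans hφ

theorem xbar_le_Ψ {t : ℝ} (ht : d.Φ d.xbar ≤ t) : d.xbar ≤ d.Ψ t := by
  obtain ⟨X, hX, htX⟩ := d.exists_le_Φ t
  obtain ⟨x, hx, rfl⟩ := intermediate_value_Icc hX
    (d.smooth.continuousOn.mono Icc_subset_Ici_self) ⟨ht, htX⟩
  rw [d.inv_left x hx.1]
  exact hx.1

theorem monotoneOn_Ψ : MonotoneOn d.Ψ (Ici (d.Φ d.xbar)) := fun t ht u hu htu => by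
  rwa [← d.strictMono.le_iff_le (d.xbar_le_Ψ ht) (d.xbar_le_Ψ hu), d.inv_right t ht,
    d.inv_right u hu]

theorem deriv_Ψ_nonneg : 0 ≤ deriv d.Ψ (d.Φ d.xbar) := by
  by_cases hdiff : DifferentiableAt ℝ d.Ψ (d.Φ d.xbar)
  · rw [← hdiff.derivWithin (uniqueDiffOn_Ici _ _ self_mem_Ici)]
    exact d.monotoneOn_Ψ.derivWithin_nonneg
  · rw [deriv_zero_of_not_differentiableAt hdiff]

theorem aconst_pos {θ : ℝ} (hθ : 0 ≤ θ) : 0 < d.aconst θ := by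
  have hΦ : 0 < d.Φ d.xbar := d.pos _ self_mem_Ici
  rw [aconst, ybar, Real.log_exp, d.inv_left _ self_mem_Ici]
  have := d.xbar_pos
  have := d.deriv_Ψ_nonneg
  positivity

/-- By concavity, `Φ` grows no faster than its secant slope on `[x̄, x̄ + 1]`. -/
theorem Φ_le {x : ℝ} (hx : d.xbar ≤ x) :
    d.Φ x ≤ d.Φ (d.xbar + 1) + (d.Φ (d.xbar + 1) - d.Φ d.xbar) * x := by
  have hmono := d.strictMono.monotoneOn
  have hs : 0 ≤ d.Φ (d.xbar + 1) - d.Φ d.xbar :=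
    sub_nonneg.mpr (hmono self_mem_Ici (by simp) (by linarith))
  rcases le_or_gt x (d.xbar + 1) with hx1 | hx1
  · have := hmono hx (by simp) hx1
    nlinarith [d.xbar_pos]
  · have hslope := d.strictConcave.concaveOn.slope_anti_adjacent self_mem_Ici
      (mem_Ici.mpr hx) (lt_add_one d.xbar) hx1
    rw [add_sub_cancel_left, div_one, div_le_iff₀ (by linarith)] at hslope
    nlinarith [d.xbar_pos]

theorem exists_mul_le_Ψ : ∃ c > 0, ∀ᶠ t in atTop, c * t ≤ d.Ψ t := by
  set A := d.Φ (d.xbar + 1)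
  set s := d.Φ (d.xbar + 1) - d.Φ d.xbar
  have hs : 0 < s := sub_pos.mpr (d.strictMono self_mem_Ici
    (by simp) (lt_add_one d.xbar))
  refine ⟨1 / (2 * s), by positivity, ?_⟩
  filter_upwards [eventually_ge_atTop (d.Φ d.xbar), eventually_ge_atTop (2 * A)] with t ht htA
  have key := d.Φ_le (d.xbar_le_Ψ ht)
  rw [d.inv_right t ht] at key
  rw [div_mul_eq_mul_div, one_mul, div_le_iff₀ (by positivity)]
  nlinarith

/-- `Ψ` grows at least linearly, so `F_Φ(y) ≳ y (log y)^θ ≥ y log y`. -/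
theorem eventually_mul_log_le_FPhi {θ : ℝ} (hθ : 1 ≤ θ) :
    ∃ K, 0 ≤ K ∧ ∀ᶠ y in atTop, y * Real.log y ≤ K * d.FPhi θ y := by
  obtain ⟨c, hc, hΨ⟩ := d.exists_mul_le_Ψ
  have ha := d.aconst_pos (zero_le_one.trans hθ)
  set a := d.aconst θ
  set b := d.bconst θ
  refine ⟨2 / (a * c), by positivity, ?_⟩
  filter_upwards [Real.tendsto_log_atTop.eventually hΨ,
    Real.tendsto_log_atTop.eventually_ge_atTop (1 / c),
    (tendsto_id.atTop_mul_atTop₀ Real.tendsto_log_atTop).eventually_ge_atTop (-2 * b / (a * c)),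
    eventually_gt_atTop d.ybar, eventually_gt_atTop 0] with y hΨy hlog hylog hy hy0
  have hΨ1 : 1 ≤ d.Ψ (Real.log y) := by
    rw [div_le_iff₀ hc] at hlog
    linarith
  have hpow := Real.self_le_rpow_of_one_le hΨ1 hθ
  rw [div_le_iff₀ (by positivity)] at hylog
  simp only [id] at hylog
  rw [FPhi, if_neg (not_le.mpr hy), div_mul_eq_mul_div, le_div_iff₀ (by positivity)]
  have : a * y * (c * Real.log y) ≤ a * y * d.Ψ (Real.log y) ^ θ := by gcongr; linarith
  nlinarith

end ClassIIData

/-- On `[0, M]` one has `y log y ≤ y (y - 1) ≤ M²`. -/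
theorem exists_mul_log_le_max {F : ℝ → ℝ} {K : ℝ}
    (hF : ∀ᶠ y in atTop, y * Real.log y ≤ K * F y) :
    ∃ C, ∀ y, 0 ≤ y → y * Real.log y ≤ max C (K * F y) := by
  obtain ⟨M, hM⟩ := eventually_atTop.mp hF
  refine ⟨M ^ 2, fun y hy => ?_⟩
  rcases le_or_gt M y with hMy | hyM
  · exact (hM y hMy).trans (le_max_right _ _)
  · refine le_max_of_le_left ?_
    rcases hy.eq_or_lt with rfl | hy0
    · simp [sq_nonneg]
    · nlinarith [Real.log_le_sub_one_of_pos hy0]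

theorem Ddiv_lt_top_of_le_max {F G f g : ℝ → ℝ} {C K : ℝ} (hK : 0 ≤ K)
    (hFG : ∀ y, 0 ≤ y → F y ≤ max C (K * G y))
    (hf0 : ∀ x ∈ Ioi (0 : ℝ), 0 ≤ f x) (hg0 : ∀ x ∈ Ioi (0 : ℝ), 0 ≤ g x)
    (hf : IntegrableOn f (Ioi 0)) (hG : Ddiv G f g < ⊤) : Ddiv F f g < ⊤ := by
  have hpt : ∀ x ∈ Ioi (0 : ℝ), ENNReal.ofReal (F (g x / f x) * f x) ≤
      ENNReal.ofReal (C * f x) + ENNReal.ofReal K * ENNReal.ofReal (G (g x / f x) * f x) := by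
    intro x hx
    have hmax := mul_le_mul_of_nonneg_right
      (hFG _ (div_nonneg (hg0 x hx) (hf0 x hx))) (hf0 x hx)
    rw [max_mul_of_nonneg _ _ (hf0 x hx)] at hmax
    rw [← ENNReal.ofReal_mul hK, ← mul_assoc]
    exact (ENNReal.ofReal_le_ofReal hmax).trans
      (by rw [ENNReal.ofReal_max]; exact max_le le_self_add le_add_self)
  calc Ddiv F f g
      ≤ ∫⁻ x in Ioi 0, (ENNReal.ofReal (C * f x) +
          ENNReal.ofReal K * ENNReal.ofReal (G (g x / f x) * f x)) :=
        setLIntegral_mono' measurableSet_Ioi hpt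
    _ = (∫⁻ x in Ioi 0, ENNReal.ofReal (C * f x)) + ENNReal.ofReal K * Ddiv G f g := by
        rw [lintegral_add_left' (hf.const_mul C).aemeasurable.ennreal_ofReal,
          lintegral_const_mul' _ _ ENNReal.ofReal_ne_top, Ddiv]
    _ < ⊤ := ENNReal.add_lt_top.mpr
        ⟨(hf.const_mul C).lintegral_lt_top, ENNReal.mul_lt_top ENNReal.ofReal_lt_top hG⟩

theorem stmt7_general
    (φ f : ℝ → ℝ)
    (hf : ∀ x ∈ Set.Ioi (0:ℝ), f x = Real.exp (-(φ x)))
    (hfint : ∫ x in Set.Ioi (0:ℝ), f x = 1)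
    (d : ClassIIData φ) (θ : ℝ) (hθ : 1 < θ)
    (g : ℝ → ℝ)
    (hg0 : ∀ x ∈ Set.Ioi (0:ℝ), 0 ≤ g x)
    (hfin : Ddiv (d.FPhi θ) f g < ⊤) :
    Ddiv (fun y => y * Real.log y) f g < ⊤ := by
  obtain ⟨K, hK, hKF⟩ := d.eventually_mul_log_le_FPhi hθ.le
  obtain ⟨C, hC⟩ := exists_mul_log_le_max hKF
  have hf0 : ∀ x ∈ Ioi (0 : ℝ), 0 ≤ f x := fun x hx => hf x hx ▸ (Real.exp_pos _).le
  have hfi : IntegrableOn f (Ioi 0) :=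
    Integrable.of_integral_ne_zero (by rw [hfint]; exact one_ne_zero)
  exact Ddiv_lt_top_of_le_max hK hC hf0 hg0 hfi hfin

/-- Proposition 4.3, first half: finite `F_Φ`-divergence implies finite KL. -/
theorem stmt7
    (φ f : ℝ → ℝ)
    (hf : ∀ x ∈ Set.Ioi (0:ℝ), f x = Real.exp (-(φ x)))
    (hfc : ContinuousOn f (Set.Ioi 0))
    (hfint : ∫ x in Set.Ioi (0:ℝ), f x = 1)
    (d : ClassIIData φ) (θ : ℝ) (hθ : 1 < θ)
    (g : ℝ → ℝ) (hgc : ContinuousOn g (Set.Ioi 0))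
    (hg0 : ∀ x ∈ Set.Ioi (0:ℝ), 0 ≤ g x)
    (hgint : ∫ x in Set.Ioi (0:ℝ), g x = 1)
    (hfin : Ddiv (d.FPhi θ) f g < ⊤) :
    Ddiv (fun y => y * Real.log y) f g < ⊤ :=
  stmt7_general φ f hf hfint d θ hθ g hg0 hfin
end
end

section
/- Let ν be a Weibull distribution with shape parameter k ∈ (0,1) and scale λ > 0, viewed as a class (ii) distribution with Φ(x) = (x/λ)^k. Let θ > 1 and let F_Φ be the associated divergence-generating function. Let η be a probability measure on [0,∞) with density g satisfying liminf_{x→∞} x^{t+1} g(x) > 0 for some t ∈ (1, θ). Then D_{F_Φ}(η|ν) = ∞. -/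
open Filter MeasureTheory Set
open scoped ENNReal Topology

noncomputable section

/-- Auxiliary: a polynomial times a stretched-exponential decay tends to zero. -/
lemma aux_tendsto_poly_exp (K p a kk : ℝ) (ha : 0 < a) (hkk : 0 < kk) :
    Tendsto (fun x : ℝ => K * x ^ p * Real.exp (-(a * x ^ kk))) atTop (nhds 0) := by
  have h1 : Tendsto (fun y : ℝ => K * (y ^ (p / kk) * Real.exp (-a * y))) atTop
      (nhds (K * 0)) :=
    (tendsto_rpow_mul_exp_neg_mul_atTop_nhds_zero (p / kk) a ha).const_mul K
  have h2 : Tendsto (fun x : ℝ => x ^ kk) atTop atTop := tendsto_rpow_atTop hkk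
  have h3 := h1.comp h2
  rw [mul_zero] at h3
  refine h3.congr' ?_
  filter_upwards [eventually_gt_atTop (0 : ℝ)] with x hx
  have hxx : ((x ^ kk) ^ (p / kk)) = x ^ p := by
    rw [← Real.rpow_mul hx.le]
    congr 1
    field_simp
  simp only [Function.comp_apply, hxx, neg_mul]
  ring

/-- Proposition 4.5 (ii): the Weibull case. -/
theorem stmt11
    (k lam : ℝ) (hk0 : 0 < k) (hk1 : k < 1) (hlam : 0 < lam)
    (φ f : ℝ → ℝ)
    (hfW : ∀ x ∈ Set.Ioi (0:ℝ),
      f x = k / lam * (x / lam) ^ (k - 1) * Real.exp (-((x / lam) ^ k)))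
    (hf : ∀ x ∈ Set.Ioi (0:ℝ), f x = Real.exp (-(φ x)))
    (d : ClassIIData φ)
    (hΦ : d.Φ = fun x => (x / lam) ^ k)
    (hΨ : d.Ψ = fun y => lam * y ^ (1 / k))
    (θ : ℝ) (hθ : 1 < θ)
    (g : ℝ → ℝ) (hgc : ContinuousOn g (Set.Ioi 0))
    (hg0 : ∀ x ∈ Set.Ioi (0:ℝ), 0 ≤ g x)
    (hgint : ∫ x in Set.Ioi (0:ℝ), g x = 1)
    (ht : ∃ t : ℝ, 1 < t ∧ t < θ ∧ ∃ c : ℝ, 0 < c ∧ ∀ᶠ x in atTop, c ≤ x ^ (t + 1) * g x) :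
    Ddiv (d.FPhi θ) f g = ⊤ := by
  obtain ⟨t, ht1, htθ, c, hc, hgl⟩ := ht
  have hθ0 : (0:ℝ) < θ := lt_trans one_pos hθ
  have hk0' : k ≠ 0 := hk0.ne'
  -- basic facts about ybar and the constant a
  have hlogy : Real.log d.ybar = d.Φ d.xbar := by rw [ClassIIData.ybar, Real.log_exp]
  have hΦx : 0 < d.Φ d.xbar := d.pos d.xbar Set.self_mem_Ici
  have hΨΦ : d.Ψ (d.Φ d.xbar) = d.xbar := d.inv_left d.xbar Set.self_mem_Ici
  have hderivΨ : deriv d.Ψ (d.Φ d.xbar) = lam * (1/k * (d.Φ d.xbar) ^ (1/k - 1)) := by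
    rw [hΨ]
    exact ((Real.hasDerivAt_rpow_const (Or.inl hΦx.ne')).const_mul lam).deriv
  have hderivΨpos : 0 < deriv d.Ψ (d.Φ d.xbar) := by
    rw [hderivΨ]
    positivity
  have ha : 0 < d.aconst θ := by
    rw [ClassIIData.aconst, hlogy, hΨΦ]
    apply div_pos (by linarith)
    have h1 : 0 < d.xbar ^ θ := Real.rpow_pos_of_pos d.xbar_pos θ
    have h2 : 0 < d.xbar ^ (θ-1) := Real.rpow_pos_of_pos d.xbar_pos _
    have h3 : 0 < θ * d.xbar ^ (θ-1) * deriv d.Ψ (d.Φ d.xbar) :=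
      mul_pos (mul_pos hθ0 h2) hderivΨpos
    linarith
  set a : ℝ := d.aconst θ with haa
  set b : ℝ := d.bconst θ with hbb
  -- auxiliary constants
  set A : ℝ := (2 * lam ^ k)⁻¹ with hA
  have hlamk : (0:ℝ) < lam ^ k := Real.rpow_pos_of_pos hlam k
  have hA0 : 0 < A := by rw [hA]; positivity
  set c3 : ℝ := lam * A ^ (1/k) with hc3
  have hc30 : 0 < c3 := by rw [hc3]; positivity
  set C : ℝ := a * c * c3 ^ θ with hC
  have hC0 : 0 < C := by
    have : (0:ℝ) < c3 ^ θ := Real.rpow_pos_of_pos hc30 θ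
    rw [hC]; positivity
  set K1 : ℝ := k / lam / lam ^ (k-1) with hK1
  have hlamk1 : (0:ℝ) < lam ^ (k-1) := Real.rpow_pos_of_pos hlam _
  -- rewriting f in power form
  have key1 : ∀ x : ℝ, 0 < x →
      f x * Real.exp (A * x ^ k) * x ^ (t+1) = K1 * x ^ (k+t) * Real.exp (-(A * x ^ k)) := by
    intro x hx
    rw [hfW x hx, Real.div_rpow hx.le hlam.le, Real.div_rpow hx.le hlam.le]
    have e1 : x ^ (k-1) * x ^ (t+1) = x ^ (k+t) := by
      rw [← Real.rpow_add hx]; ring_nf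
    have e2 : Real.exp (-(x ^ k / lam ^ k)) * Real.exp (A * x ^ k) = Real.exp (-(A * x ^ k)) := by
      rw [← Real.exp_add]
      congr 1
      rw [hA]
      field_simp
      ring
    rw [hK1, ← e1, ← e2]
    ring
  have key2 : ∀ x : ℝ, 0 < x →
      f x * x ^ (t+1-θ) = K1 * x ^ (k+t-θ) * Real.exp (-((lam ^ k)⁻¹ * x ^ k)) := by
    intro x hx
    rw [hfW x hx, Real.div_rpow hx.le hlam.le, Real.div_rpow hx.le hlam.le]
    have e1 : x ^ (k-1) * x ^ (t+1-θ) = x ^ (k+t-θ) := by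
      rw [← Real.rpow_add hx]; ring_nf
    have e2 : x ^ k / lam ^ k = (lam ^ k)⁻¹ * x ^ k := by
      field_simp
    rw [hK1, ← e1, e2]
    ring
  -- eventual bounds
  have ev1 : ∀ᶠ x in atTop, f x * Real.exp (A * x ^ k) * x ^ (t+1) ≤ c := by
    have h := (aux_tendsto_poly_exp K1 (k+t) A k hA0 hk0).eventually_lt_const hc
    filter_upwards [h, eventually_gt_atTop (0:ℝ)] with x hle hx
    rw [key1 x hx]; exact hle.le
  have ev2 : ∀ᶠ x in atTop, (|b|+1) * (f x * x ^ (t+1-θ)) ≤ C/2 := by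
    have hlk0 : (0:ℝ) < (lam ^ k)⁻¹ := by positivity
    have h0 := (aux_tendsto_poly_exp K1 (k+t-θ) ((lam ^ k)⁻¹) k hlk0 hk0).const_mul (|b|+1)
    rw [mul_zero] at h0
    have h := h0.eventually_lt_const (by positivity : (0:ℝ) < C/2)
    filter_upwards [h, eventually_gt_atTop (0:ℝ)] with x hle hx
    have := key2 x hx
    calc (|b|+1) * (f x * x ^ (t+1-θ))
        = (|b|+1) * (K1 * x ^ (k+t-θ) * Real.exp (-((lam ^ k)⁻¹ * x ^ k))) := by rw [this]
      _ ≤ C/2 := hle.le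
  have ev3 : ∀ᶠ x in atTop, d.ybar < Real.exp (A * x ^ k) := by
    have h2 : Tendsto (fun x : ℝ => A * x ^ k) atTop atTop :=
      (tendsto_rpow_atTop hk0).const_mul_atTop hA0
    exact (Real.tendsto_exp_atTop.comp h2).eventually_gt_atTop d.ybar
  -- the main pointwise lower bound
  have evAll : ∀ᶠ x in atTop,
      (C/2) * x ^ (θ-t-1) ≤ d.FPhi θ (g x / f x) * f x := by
    filter_upwards [hgl, ev1, ev2, ev3, eventually_gt_atTop (0:ℝ)] with x hg1 h1 h2 h3 hx
    have hfx : f x = k / lam * (x / lam) ^ (k - 1) * Real.exp (-((x / lam) ^ k)) := hfW x hx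
    have hfpos : 0 < f x := by
      rw [hfx]
      have : (0:ℝ) < x / lam := div_pos hx hlam
      positivity
    have hxp : 0 < x ^ (t+1) := Real.rpow_pos_of_pos hx _
    -- lower bound on g
    have hg1' : c ≤ g x * x ^ (t+1) := by rw [mul_comm]; exact hg1
    have hglb : c * x ^ (-(t+1)) ≤ g x := by
      rw [Real.rpow_neg hx.le, ← div_eq_mul_inv, div_le_iff₀ hxp]
      exact hg1'
    -- exp lower bound on the ratio
    have hfe : f x * Real.exp (A * x ^ k) ≤ g x := by
      have h4 : f x * Real.exp (A * x ^ k) * x ^ (t+1) ≤ g x * x ^ (t+1) := by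
        calc f x * Real.exp (A * x ^ k) * x ^ (t+1) ≤ c := h1
          _ ≤ x ^ (t+1) * g x := hg1
          _ = g x * x ^ (t+1) := by ring
      exact le_of_mul_le_mul_right h4 hxp
    have hexp_le : Real.exp (A * x ^ k) ≤ g x / f x := by
      rw [le_div_iff₀ hfpos]
      linarith [hfe]
    have hygt : d.ybar < g x / f x := lt_of_lt_of_le h3 hexp_le
    have hyf_pos : 0 < g x / f x := lt_of_lt_of_le (Real.exp_pos _) hexp_le
    have hlog : A * x ^ k ≤ Real.log (g x / f x) :=
      (Real.le_log_iff_exp_le hyf_pos).mpr hexp_le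
    have hlognn : 0 ≤ Real.log (g x / f x) := le_trans (by positivity) hlog
    -- branch of FPhi
    have hF : d.FPhi θ (g x / f x)
        = a * (g x / f x) * d.Ψ (Real.log (g x / f x)) ^ θ + b := by
      simp only [ClassIIData.FPhi]
      rw [if_neg (not_le.mpr hygt)]
    -- lower bound on Ψ(log(g/f))
    have hΨval : c3 * x ≤ d.Ψ (Real.log (g x / f x)) := by
      rw [hΨ]
      have h' : (A * x ^ k) ^ (1/k) ≤ (Real.log (g x / f x)) ^ (1/k) :=
        Real.rpow_le_rpow (by positivity) hlog (by positivity)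
      have heq : (A * x ^ k) ^ (1/k) = A ^ (1/k) * x := by
        rw [Real.mul_rpow hA0.le (Real.rpow_nonneg hx.le k), ← Real.rpow_mul hx.le]
        rw [show k * (1/k) = 1 by field_simp, Real.rpow_one]
      rw [hc3, mul_assoc]
      have := mul_le_mul_of_nonneg_left h' hlam.le
      rw [heq] at this
      exact this
    have hΨnn : 0 ≤ d.Ψ (Real.log (g x / f x)) := le_trans (by positivity) hΨval
    have hΨθ : c3 ^ θ * x ^ θ ≤ d.Ψ (Real.log (g x / f x)) ^ θ := by
      have h' : (c3 * x) ^ θ ≤ d.Ψ (Real.log (g x / f x)) ^ θ :=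
        Real.rpow_le_rpow (by positivity) hΨval hθ0.le
      rwa [Real.mul_rpow hc30.le hx.le] at h'
    -- main term bound
    have hmain : a * (c * x ^ (-(t+1))) * (c3 ^ θ * x ^ θ)
        ≤ a * g x * d.Ψ (Real.log (g x / f x)) ^ θ := by
      have hg0x : 0 ≤ g x := hg0 x hx
      have h5 : a * (c * x ^ (-(t+1))) ≤ a * g x :=
        mul_le_mul_of_nonneg_left hglb ha.le
      apply mul_le_mul h5 hΨθ (by positivity) (by positivity)
    have hmaineq : a * (c * x ^ (-(t+1))) * (c3 ^ θ * x ^ θ) = C * x ^ (θ-t-1) := by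
      have hxe : x ^ (-(t+1)) * x ^ θ = x ^ (θ-t-1) := by
        rw [← Real.rpow_add hx]; ring_nf
      rw [hC, ← hxe]; ring
    -- the b·f term bound
    have hxq : 0 < x ^ (t+1-θ) := Real.rpow_pos_of_pos hx _
    have hb1 : |b| * f x * x ^ (t+1-θ) ≤ C/2 := by
      have hfq : 0 ≤ f x * x ^ (t+1-θ) := by positivity
      have h8 : |b| * (f x * x ^ (t+1-θ)) ≤ (|b|+1) * (f x * x ^ (t+1-θ)) :=
        mul_le_mul_of_nonneg_right (by linarith [abs_nonneg b]) hfq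
      calc |b| * f x * x ^ (t+1-θ) = |b| * (f x * x ^ (t+1-θ)) := by ring
        _ ≤ (|b|+1) * (f x * x ^ (t+1-θ)) := h8
        _ ≤ C/2 := h2
    have hinv' : x ^ (t+1-θ) * x ^ (θ-t-1) = 1 := by
      rw [← Real.rpow_add hx, show t+1-θ+(θ-t-1) = 0 by ring, Real.rpow_zero]
    have h6 := mul_le_mul_of_nonneg_right hb1 (Real.rpow_nonneg hx.le (θ-t-1))
    rw [mul_assoc, hinv', mul_one] at h6
    have hbf : -(C/2 * x ^ (θ-t-1)) ≤ b * f x := by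
      have h7 : -|b| * f x ≤ b * f x :=
        mul_le_mul_of_nonneg_right (neg_abs_le b) hfpos.le
      have : -|b| * f x = -(|b| * f x) := by ring
      rw [this] at h7
      linarith [h6]
    -- combine
    have hexpand : d.FPhi θ (g x / f x) * f x
        = a * g x * d.Ψ (Real.log (g x / f x)) ^ θ + b * f x := by
      rw [hF, add_mul]
      congr 1
      field_simp
    rw [hexpand]
    have hfinal := le_trans (le_of_eq hmaineq.symm) hmain
    linarith [hfinal, hbf]
  -- extract a threshold
  obtain ⟨M, hM⟩ := eventually_atTop.1 evAll
  set M' : ℝ := max M 1 with hM'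
  have hM'pos : (0:ℝ) < M' := lt_of_lt_of_le one_pos (le_max_right _ _)
  -- the divergent comparison integral
  have hbase : ∫⁻ x in Set.Ioi M', ENNReal.ofReal (x ^ (θ-t-1)) = ⊤ := by
    by_contra hne
    have hmeas : AEStronglyMeasurable (fun x : ℝ => x ^ (θ-t-1))
        (volume.restrict (Set.Ioi M')) := by
      apply ContinuousOn.aestronglyMeasurable ?_ measurableSet_Ioi
      intro x hx
      exact (Real.continuousAt_rpow_const x _
        (Or.inl (lt_trans hM'pos hx).ne')).continuousWithinAt
    have hnn : ∀ᵐ x ∂(volume.restrict (Set.Ioi M')), 0 ≤ x ^ (θ-t-1) := by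
      rw [ae_restrict_iff' measurableSet_Ioi]
      exact ae_of_all _ fun x hx => Real.rpow_nonneg (le_of_lt (lt_trans hM'pos hx)) _
    have hint := (lintegral_ofReal_ne_top_iff_integrable hmeas hnn).mp hne
    have := (integrableOn_Ioi_rpow_iff hM'pos).mp hint
    linarith
  have hconst : ∫⁻ x in Set.Ioi M', ENNReal.ofReal ((C/2) * x ^ (θ-t-1)) = ⊤ := by
    have hC2 : (0:ℝ) ≤ C/2 := by positivity
    simp_rw [ENNReal.ofReal_mul hC2]
    rw [lintegral_const_mul' _ _ ENNReal.ofReal_ne_top, hbase,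
      ENNReal.mul_top (by simpa using (ENNReal.ofReal_pos.mpr (by positivity : (0:ℝ) < C/2)).ne')]
  -- conclude
  rw [Ddiv, eq_top_iff]
  calc (⊤ : ℝ≥0∞) = ∫⁻ x in Set.Ioi M', ENNReal.ofReal ((C/2) * x ^ (θ-t-1)) := hconst.symm
    _ ≤ ∫⁻ x in Set.Ioi M', ENNReal.ofReal (d.FPhi θ (g x / f x) * f x) := by
        refine lintegral_mono_ae ?_
        rw [ae_restrict_iff' measurableSet_Ioi]
        refine ae_of_all _ fun x hx => ?_
        exact ENNReal.ofReal_le_ofReal (hM x (le_trans (le_max_left _ _) (le_of_lt hx)))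
    _ ≤ ∫⁻ x in Set.Ioi 0, ENNReal.ofReal (d.FPhi θ (g x / f x) * f x) :=
        lintegral_mono_set (Set.Ioi_subset_Ioi hM'pos.le)
end
end

section
/- Let ν be a generalized lognormal distribution with parameters r > 1, σ > 0, μ ∈ ℝ, viewed as a class (ii) distribution with Φ(x) = (log x)^r/(r σ^r). Let θ > 1 and let F_Φ be the associated divergence-generating function. Let η be a probability measure on [0,∞) with density g satisfying liminf_{x→∞} x^{t+1} g(x) > 0 for some t ∈ (1, θ). Then D_{F_Φ}(η|ν) = ∞. -/
open Filter MeasureTheory Set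
open scoped ENNReal Topology

noncomputable section

lemma auxpoly (r : ℝ) (hr : 1 < r) (a b c : ℝ) (ha : 0 < a) :
    ∀ᶠ L in atTop, b * L + c ≤ a * L ^ r := by
  have h1 : Tendsto (fun L : ℝ => L ^ (r - 1)) atTop atTop :=
    tendsto_rpow_atTop (by linarith)
  filter_upwards [eventually_ge_atTop (1:ℝ), h1.eventually_ge_atTop ((|b| + |c|)/a)]
    with L hL1 hLr
  have hL0 : (0:ℝ) < L := lt_of_lt_of_le one_pos hL1
  have h2 : a * L ^ r = a * L ^ (r-1) * L := by
    rw [show r = (r-1) + 1 by ring, Real.rpow_add_one hL0.ne']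
    ring
  have h3 : |b| + |c| ≤ a * L ^ (r-1) := by
    rw [div_le_iff₀ ha] at hLr
    linarith [hLr]
  have h4 : (|b| + |c|) * L ≤ a * L ^ (r-1) * L :=
    mul_le_mul_of_nonneg_right h3 hL0.le
  have h5 : b * L + c ≤ (|b| + |c|) * L := by
    have h6 : b * L ≤ |b| * L := mul_le_mul_of_nonneg_right (le_abs_self b) hL0.le
    have h7 : |c| * 1 ≤ |c| * L := mul_le_mul_of_nonneg_left hL1 (abs_nonneg c)
    have h8 := le_abs_self c
    linarith
  linarith

lemma linttop (M C p : ℝ) (hM : 0 < M) (hC : 0 < C) (hp : -1 < p) :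
    ∫⁻ x in Ioi M, ENNReal.ofReal (C * x ^ p) = ⊤ := by
  by_contra h
  have hmeas : AEStronglyMeasurable (fun x : ℝ => C * x ^ p) (volume.restrict (Ioi M)) := by
    refine ContinuousOn.aestronglyMeasurable ?_ measurableSet_Ioi
    refine continuousOn_const.mul (fun x hx => ?_)
    exact (Real.continuousAt_rpow_const x p (Or.inl (ne_of_gt (hM.trans hx)))).continuousWithinAt
  have hnn : 0 ≤ᵐ[volume.restrict (Ioi M)] fun x : ℝ => C * x ^ p := by
    filter_upwards [ae_restrict_mem measurableSet_Ioi] with x hx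
    have : (0:ℝ) < x := hM.trans hx
    positivity
  have hint : Integrable (fun x : ℝ => C * x ^ p) (volume.restrict (Ioi M)) :=
    ⟨hmeas, (hasFiniteIntegral_iff_ofReal hnn).2 (lt_top_iff_ne_top.2 h)⟩
  have h2 : IntegrableOn (fun x : ℝ => x ^ p) (Ioi M) := by
    have h3 := hint.const_mul C⁻¹
    refine h3.congr (ae_of_all _ fun x => ?_)
    field_simp
  rw [integrableOn_Ioi_rpow_iff hM] at h2
  linarith

set_option maxHeartbeats 2000000 in
/-- Proposition 4.5 (iii): the generalized lognormal case. -/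
theorem stmt12
    (r σ μ : ℝ) (hr : 1 < r) (hσ : 0 < σ)
    (Z : ℝ) (hZ : Z = 2 * r ^ (1 / r) * σ * Real.Gamma (1 + 1 / r))
    (φ f : ℝ → ℝ)
    (hfLN : ∀ x ∈ Set.Ioi (0:ℝ),
      f x = 1 / (Z * x) * Real.exp (-(|Real.log x - μ| ^ r / (r * σ ^ r))))
    (hf : ∀ x ∈ Set.Ioi (0:ℝ), f x = Real.exp (-(φ x)))
    (d : ClassIIData φ)
    (hΦ : d.Φ = fun x => Real.log x ^ r / (r * σ ^ r))
    (hΨ : d.Ψ = fun y => Real.exp (σ * r ^ (1 / r) * y ^ (1 / r)))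
    (θ : ℝ) (hθ : 1 < θ)
    (g : ℝ → ℝ) (hgc : ContinuousOn g (Set.Ioi 0))
    (hg0 : ∀ x ∈ Set.Ioi (0:ℝ), 0 ≤ g x)
    (hgint : ∫ x in Set.Ioi (0:ℝ), g x = 1)
    (ht : ∃ t : ℝ, 1 < t ∧ t < θ ∧ ∃ c : ℝ, 0 < c ∧ ∀ᶠ x in atTop, c ≤ x ^ (t + 1) * g x) :
    Ddiv (d.FPhi θ) f g = ⊤ := by
  classical
  obtain ⟨t, ht1, htθ, c, hc, hge⟩ := ht
  have hr0 : (0:ℝ) < r := lt_trans one_pos hr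
  have hθ0 : (0:ℝ) < θ := lt_trans one_pos hθ
  have hZ0 : 0 < Z := by
    rw [hZ]
    have hg : 0 < Real.Gamma (1 + 1/r) := Real.Gamma_pos_of_pos (by positivity)
    positivity
  have hA0 : (0:ℝ) < r * σ ^ r := by positivity
  obtain ⟨A, hAdef⟩ : ∃ y, y = r * σ ^ r := ⟨_, rfl⟩
  rw [← hAdef] at hA0
  -- the explicit formula for φ
  have hφx : ∀ x : ℝ, 0 < x → φ x = Real.log Z + Real.log x + |Real.log x - μ| ^ r / A := by
    intro x hx
    have h1 := hf x hx
    have h2 := hfLN x hx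
    have hZx : (0:ℝ) < 1 / (Z * x) := by positivity
    have h3 : Real.exp (-(φ x)) =
        Real.exp (-(Real.log Z + Real.log x + |Real.log x - μ| ^ r / A)) := by
      rw [← h1, h2, ← Real.exp_log hZx, ← Real.exp_add]
      congr 1
      rw [one_div, Real.log_inv, Real.log_mul hZ0.ne' hx.ne', hAdef]
      ring
    have h4 := Real.exp_eq_exp.mp h3
    linarith
  -- positivity of the constant a
  have hy0 : 0 < d.Φ d.xbar := d.pos d.xbar (mem_Ici.mpr le_rfl)
  obtain ⟨y0, hy0def⟩ : ∃ y, y = d.Φ d.xbar := ⟨_, rfl⟩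
  rw [← hy0def] at hy0
  have hlogy : Real.log d.ybar = y0 := by
    rw [ClassIIData.ybar, Real.log_exp]; exact hy0def.symm
  have hΨy0 : d.Ψ y0 = d.xbar := by
    rw [hy0def]; exact d.inv_left d.xbar (mem_Ici.mpr le_rfl)
  have hΨ'pos : 0 < deriv d.Ψ y0 := by
    have hd1 : HasDerivAt (fun y : ℝ => Real.exp (σ * r ^ (1/r : ℝ) * y ^ (1/r : ℝ)))
        (Real.exp (σ * r ^ (1/r:ℝ) * y0 ^ (1/r:ℝ)) *
          (σ * r ^ (1/r:ℝ) * (1/r * y0 ^ ((1:ℝ)/r - 1)))) y0 :=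
      ((Real.hasDerivAt_rpow_const (Or.inl hy0.ne')).const_mul (σ * r ^ (1/r:ℝ))).exp
    have h5 : deriv d.Ψ y0 = Real.exp (σ * r ^ (1/r:ℝ) * y0 ^ (1/r:ℝ)) *
        (σ * r ^ (1/r:ℝ) * (1/r * y0 ^ ((1:ℝ)/r - 1))) := by
      rw [hΨ]; exact hd1.deriv
    rw [h5]
    positivity
  have ha0 : 0 < d.aconst θ := by
    rw [ClassIIData.aconst, hlogy, hΨy0]
    have hx0 := d.xbar_pos
    apply div_pos (by linarith)
    have p1 : (0:ℝ) < d.xbar ^ θ := Real.rpow_pos_of_pos hx0 _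
    have p2 : (0:ℝ) < d.xbar ^ (θ - 1) := Real.rpow_pos_of_pos hx0 _
    have p3 := mul_pos (mul_pos hθ0 p2) hΨ'pos
    linarith
  -- the exponents
  obtain ⟨β, hβdef⟩ : ∃ y, y = (t + θ)/2 := ⟨_, rfl⟩
  have hβt : t < β := by rw [hβdef]; linarith
  have hβθ : β < θ := by rw [hβdef]; linarith
  have hβ0 : (0:ℝ) < β := by rw [hβdef]; linarith
  have hβθ' : (0:ℝ) < β/θ := by positivity
  obtain ⟨k, hkdef⟩ : ∃ y, y = (β/θ) ^ r := ⟨_, rfl⟩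
  have hk0 : 0 < k := by rw [hkdef]; exact Real.rpow_pos_of_pos hβθ' r
  have hk1 : k < 1 := by
    rw [hkdef]
    exact Real.rpow_lt_one hβθ'.le (by rw [div_lt_one hθ0]; exact hβθ) hr0
  have hkr : k ^ (1/r : ℝ) = β/θ := by
    rw [hkdef, ← Real.rpow_mul hβθ'.le, mul_one_div_cancel hr0.ne', Real.rpow_one]
  obtain ⟨k₂, hk₂def⟩ : ∃ y, y = (k+1)/2 := ⟨_, rfl⟩
  have hk₂k : k < k₂ := by rw [hk₂def]; linarith
  have hk₂1 : k₂ < 1 := by rw [hk₂def]; linarith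
  have hk₂0 : 0 < k₂ := lt_trans hk0 hk₂k
  obtain ⟨κ, hκdef⟩ : ∃ y, y = k₂ ^ (1/r : ℝ) := ⟨_, rfl⟩
  have hκ0 : 0 < κ := by rw [hκdef]; exact Real.rpow_pos_of_pos hk₂0 _
  have hκ1 : κ < 1 := by
    rw [hκdef]
    exact Real.rpow_lt_one hk₂0.le hk₂1 (by positivity)
  have hκr : κ ^ r = k₂ := by
    rw [hκdef, ← Real.rpow_mul hk₂0.le, one_div_mul_cancel hr0.ne', Real.rpow_one]
  -- the constant controlling the b-term
  obtain ⟨K, hKdef⟩ : ∃ y, y = 2 * |d.bconst θ| / (d.aconst θ * c) + 1 := ⟨_, rfl⟩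
  have hK1 : 1 ≤ K := by
    rw [hKdef]
    have : 0 ≤ 2 * |d.bconst θ| / (d.aconst θ * c) := by positivity
    linarith
  have hK0 : (0:ℝ) < K := lt_of_lt_of_le one_pos hK1
  -- eventual estimates
  have hLtop := Real.tendsto_log_atTop
  have E2 : ∀ᶠ x : ℝ in atTop, μ ≤ (1 - κ) * Real.log x := by
    have hT : Tendsto (fun L : ℝ => (1 - κ) * L) atTop atTop :=
      Tendsto.const_mul_atTop (by linarith) tendsto_id
    exact hLtop.eventually (hT.eventually_ge_atTop μ)
  have E4 : ∀ᶠ x : ℝ in atTop,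
      t * Real.log x + -(Real.log Z + Real.log c) ≤ ((k₂ - k)/A) * Real.log x ^ r :=
    hLtop.eventually (auxpoly r hr _ _ _ (div_pos (by linarith) hA0))
  have E5 : ∀ᶠ x : ℝ in atTop, 0 * Real.log x + (y0 + 1) ≤ (k/A) * Real.log x ^ r :=
    hLtop.eventually (auxpoly r hr _ _ _ (by positivity))
  have E6 : ∀ᶠ x : ℝ in atTop,
      (t - β) * Real.log x + (Real.log K - Real.log Z) ≤ (k₂/A) * Real.log x ^ r :=
    hLtop.eventually (auxpoly r hr _ _ _ (div_pos hk₂0 hA0))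
  -- main eventual lower bound for the integrand
  have hmain : ∀ᶠ x in atTop, ENNReal.ofReal (d.aconst θ * c / 2 * x ^ (β - t - 1)) ≤
      ENNReal.ofReal (d.FPhi θ (g x / f x) * f x) := by
    filter_upwards [hge, eventually_ge_atTop (1:ℝ),
      hLtop.eventually (eventually_ge_atTop (1:ℝ)), E2, E4, E5, E6]
      with x hgex hx1 hL1 hE2 hE4 hE5 hE6
    obtain ⟨L, hLdef⟩ : ∃ y, y = Real.log x := ⟨_, rfl⟩
    rw [← hLdef] at hL1 hE2 hE4 hE5 hE6
    have hx0 : (0:ℝ) < x := lt_of_lt_of_le one_pos hx1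
    have hL0 : (0:ℝ) < L := lt_of_lt_of_le one_pos hL1
    have hxt : (0:ℝ) < x ^ (t+1) := Real.rpow_pos_of_pos hx0 _
    have hgx : c / x ^ (t+1) ≤ g x := by
      rw [div_le_iff₀ hxt]
      linarith [hgex]
    have hgx0 : 0 < g x := lt_of_lt_of_le (by positivity) hgx
    have hfx0 : 0 < f x := by rw [hf x hx0]; exact Real.exp_pos _
    have hφ := hφx x hx0
    rw [← hLdef] at hφ
    have hLμ : κ * L ≤ L - μ := by linarith [hE2]
    have hLμ0 : 0 ≤ L - μ := le_trans (by positivity) hLμ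
    have habs : |L - μ| = L - μ := abs_of_nonneg hLμ0
    have h3 : k₂ * L ^ r ≤ (L - μ) ^ r := by
      have h3' := Real.rpow_le_rpow (by positivity) hLμ hr0.le
      rwa [Real.mul_rpow hκ0.le hL0.le, hκr] at h3'
    obtain ⟨u, hudef⟩ : ∃ y, y = Real.log (g x / f x) := ⟨_, rfl⟩
    have hlogf : Real.log (f x) = -(φ x) := by rw [hf x hx0, Real.log_exp]
    have hloggx : Real.log c - (t+1) * L ≤ Real.log (g x) := by
      have h4 : Real.log (c / x ^ (t+1)) ≤ Real.log (g x) :=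
        Real.log_le_log (div_pos hc hxt) hgx
      rwa [Real.log_div hc.ne' hxt.ne', Real.log_rpow hx0, ← hLdef] at h4
    have hu1 : Real.log c - (t+1) * L + φ x ≤ u := by
      rw [hudef, Real.log_div hgx0.ne' hfx0.ne', hlogf]
      linarith
    have hu2 : k * L ^ r / A ≤ u := by
      rw [hφ, habs] at hu1
      have hdiv : k₂ * L ^ r / A ≤ (L - μ) ^ r / A := by gcongr
      have hsplit : ((k₂ - k)/A) * L ^ r = k₂ * L ^ r / A - k * L ^ r / A := by ring
      linarith [hE4, hu1, hdiv, hsplit]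
    have huy0 : y0 < u := by
      have hsplit2 : (k/A) * L ^ r = k * L ^ r / A := by ring
      linarith [hu2, hE5, hsplit2]
    have hu0 : (0:ℝ) < u := lt_trans hy0 huy0
    have hlt : d.ybar < g x / f x := by
      rw [ClassIIData.ybar, ← Real.exp_log (div_pos hgx0 hfx0), ← hudef, ← hy0def]
      exact Real.exp_lt_exp.mpr huy0
    have hFval : d.FPhi θ (g x / f x) =
        d.aconst θ * (g x / f x) * d.Ψ u ^ θ + d.bconst θ := by
      simp only [ClassIIData.FPhi]
      rw [if_neg (not_le.mpr hlt), ← hudef]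
    -- the key lower bound for Ψ(u)^θ
    have hΨub : x ^ β ≤ d.Ψ u ^ θ := by
      rw [hΨ]
      show x ^ β ≤ Real.exp (σ * r ^ ((1:ℝ)/r) * u ^ ((1:ℝ)/r)) ^ θ
      have e1 : (k * L ^ r / A) ^ (1/r : ℝ) = (β/θ) * L / (r ^ (1/r:ℝ) * σ) := by
        rw [hAdef, Real.div_rpow (by positivity) (by positivity),
            Real.mul_rpow hk0.le (by positivity),
            Real.mul_rpow hr0.le (by positivity),
            ← Real.rpow_mul hL0.le, ← Real.rpow_mul hσ.le,
            mul_one_div_cancel hr0.ne', Real.rpow_one, Real.rpow_one, hkr]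
      have hmono : (k * L ^ r / A) ^ (1/r:ℝ) ≤ u ^ (1/r:ℝ) :=
        Real.rpow_le_rpow
          (div_nonneg (mul_nonneg hk0.le (Real.rpow_nonneg hL0.le r)) hA0.le)
          hu2 (by positivity)
      have hrp : (0:ℝ) < r ^ (1/r:ℝ) := Real.rpow_pos_of_pos hr0 _
      have h7 : σ * r ^ (1/r:ℝ) * ((β/θ) * L / (r ^ (1/r:ℝ) * σ)) = (β/θ) * L := by
        field_simp
      have h8 : (β/θ) * L ≤ σ * r ^ (1/r:ℝ) * u ^ (1/r:ℝ) := by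
        have h8' := mul_le_mul_of_nonneg_left hmono
          (show (0:ℝ) ≤ σ * r ^ (1/r:ℝ) by positivity)
        rw [e1, h7] at h8'
        exact h8'
      have h6 : β * L ≤ σ * r ^ (1/r:ℝ) * u ^ (1/r:ℝ) * θ := by
        have h9 := mul_le_mul_of_nonneg_right h8 hθ0.le
        have h9' : (β/θ) * L * θ = β * L := by field_simp
        linarith [h9, h9']
      calc x ^ β = Real.exp (L * β) := by rw [Real.rpow_def_of_pos hx0, ← hLdef]
        _ ≤ Real.exp (σ * r ^ ((1:ℝ)/r) * u ^ ((1:ℝ)/r) * θ) :=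
            Real.exp_le_exp.mpr (by linarith [h6])
        _ = Real.exp (σ * r ^ ((1:ℝ)/r) * u ^ ((1:ℝ)/r)) ^ θ := by
            rw [Real.rpow_def_of_pos (Real.exp_pos _), Real.log_exp]
    have hxp : (0:ℝ) < x ^ (β - t - 1) := Real.rpow_pos_of_pos hx0 _
    have hFf : d.FPhi θ (g x / f x) * f x =
        d.aconst θ * g x * d.Ψ u ^ θ + d.bconst θ * f x := by
      rw [hFval]
      field_simp
    have hsub : x ^ (β - t - 1) = x ^ β / x ^ (t+1) := by
      rw [show β - t - 1 = β - (t+1) by ring, Real.rpow_sub hx0]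
    have ht1' : d.aconst θ * (c * x ^ (β - t - 1)) ≤ d.aconst θ * (g x * d.Ψ u ^ θ) := by
      apply mul_le_mul_of_nonneg_left ?_ ha0.le
      have h10 : c / x ^ (t+1) * x ^ β ≤ g x * d.Ψ u ^ θ :=
        mul_le_mul hgx hΨub (by positivity) hgx0.le
      have h11 : c / x ^ (t+1) * x ^ β = c * x ^ (β - t - 1) := by
        rw [hsub]; ring
      linarith [h10, h11.ge]
    have hE6' : (1 + t - β) * L + Real.log K ≤ φ x := by
      rw [hφ, habs]
      have hdiv2 : k₂ * L ^ r / A ≤ (L - μ) ^ r / A := by gcongr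
      have hsplit3 : (k₂/A) * L ^ r = k₂ * L ^ r / A := by ring
      linarith [hE6, hdiv2, hsplit3, h3]
    have hfK : f x ≤ x ^ (β - t - 1) / K := by
      rw [hf x hx0]
      have h12 : -(φ x) ≤ (β - t - 1) * L - Real.log K := by linarith [hE6']
      calc Real.exp (-(φ x)) ≤ Real.exp ((β - t - 1) * L - Real.log K) :=
            Real.exp_le_exp.mpr h12
        _ = x ^ (β - t - 1) / K := by
            rw [Real.exp_sub, Real.exp_log hK0, Real.rpow_def_of_pos hx0, ← hLdef,
              mul_comm]
    have hterm2 : -(d.aconst θ * c / 2 * x ^ (β - t - 1)) ≤ d.bconst θ * f x := by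
      have h13 : |d.bconst θ| * f x ≤ |d.bconst θ| * (x ^ (β-t-1) / K) :=
        mul_le_mul_of_nonneg_left hfK (abs_nonneg _)
      have h14 : |d.bconst θ| * (x ^ (β-t-1) / K) ≤ d.aconst θ * c / 2 * x ^ (β-t-1) := by
        have hacne : d.aconst θ * c ≠ 0 := (mul_pos ha0 hc).ne'
        have h15 : d.aconst θ * c / 2 * K = |d.bconst θ| + d.aconst θ * c / 2 := by
          rw [hKdef]
          field_simp
        have hac : 0 < d.aconst θ * c / 2 := by
          have := mul_pos ha0 hc; linarith
        have h17 : |d.bconst θ| / K ≤ d.aconst θ * c / 2 := by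
          rw [div_le_iff₀ hK0]; linarith [h15, hac]
        calc |d.bconst θ| * (x ^ (β-t-1) / K)
            = (|d.bconst θ| / K) * x ^ (β-t-1) := by ring
          _ ≤ d.aconst θ * c / 2 * x ^ (β-t-1) :=
            mul_le_mul_of_nonneg_right h17 hxp.le
      have h16 := mul_le_mul_of_nonneg_right (neg_abs_le (d.bconst θ)) hfx0.le
      linarith [h13, h14, h16]
    apply ENNReal.ofReal_le_ofReal
    rw [hFf]
    linarith [ht1', hterm2]
  -- conclusion
  obtain ⟨M₀, hM₀⟩ := eventually_atTop.mp hmain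
  obtain ⟨M, hMdef⟩ : ∃ y, y = max M₀ 1 := ⟨_, rfl⟩
  have hM0 : (0:ℝ) < M := by
    rw [hMdef]; exact lt_of_lt_of_le one_pos (le_max_right _ _)
  have hMM : M₀ ≤ M := by rw [hMdef]; exact le_max_left _ _
  have htop : ∫⁻ x in Ioi M, ENNReal.ofReal (d.aconst θ * c / 2 * x ^ (β - t - 1)) = ⊤ :=
    linttop M _ _ hM0 (by have := mul_pos ha0 hc; linarith) (by linarith)
  have hle1 : (⊤:ℝ≥0∞) ≤ ∫⁻ x in Ioi M, ENNReal.ofReal (d.FPhi θ (g x / f x) * f x) := by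
    rw [← htop]
    refine lintegral_mono_ae ?_
    filter_upwards [ae_restrict_mem measurableSet_Ioi] with x hx
    exact hM₀ x (le_trans hMM (le_of_lt hx))
  have hle2 : ∫⁻ x in Ioi M, ENNReal.ofReal (d.FPhi θ (g x / f x) * f x) ≤
      ∫⁻ x in Set.Ioi (0:ℝ), ENNReal.ofReal (d.FPhi θ (g x / f x) * f x) :=
    lintegral_mono_set (Ioi_subset_Ioi hM0.le)
  rw [Ddiv]
  exact top_le_iff.mp (le_trans hle1 hle2)
end
end
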